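/- (Combinatorial parallel adversary bound, Theorem 2.) With the parallel oracle model and algorithm model below, let X and Y be disjoint finite sets of oracles and F a multi-valued function with F(x) ∩ F(y) = ∅ whenever x ∈ X and y ∈ Y, and let R ⊆ X × Y be a relation. For each tuple (i₁,…,i_p) ∈ (Fin N)^p set R^{i₁⋯i_p} = {(x,y) ∈ R : x_{i_j} ≠ y_{i_j} for some j}. Suppose every x ∈ X is related by R to at least h ≥ 1 elements of Y, every y ∈ Y to at least h' ≥ 1 elements of X, and for every tuple every x is related by R^{i₁⋯i_p} to at most ℓ elements and every y to at most ℓ' elements, with ℓ, ℓ' ≥ 1. If a T-step p-parallel algorithm satisfies, for every x ∈ X ∪ Y, Σ_{basis indices k with out(k) ∈ F(x)} |⟨e_k, ψ_x⟩|² ≥ 9/10, then T ≥ (1/6)·√(h·h' / (ℓ·ℓ')). -/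

import Mathlib

/-!
The proof is the adversary method with the progress measure
`W t = ∑_{(x, y) ∈ R} Re ⟪ψ_x^t, ψ_y^t⟫`, where `ψ_z^t` is the state after `t` parallel queries.
All states agree before the first query, so `W 0 = |R|`. At the end the two states of a related
pair put weight at least `9/10` on disjoint sets of basis vectors, so their overlap is at most
`2 √(1/10) ≤ 2/3` and `W T ≤ 2|R|/3`.

A parallel query acts on each query tuple `i` separately, and identically for `x` and `y` unless
they differ somewhere on `i`. Hence one step lowers the overlap of `ψ_x, ψ_y` by at most
`2 ∑_i √(q_i(ψ_x) q_i(ψ_y))`, the sum over the tuples distinguishing `x` from `y`, with `q_i` the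
weight of a state on query tuple `i`. Summed over `R`, Cauchy–Schwarz and the degree bounds
`ℓ, ℓ'` bound the loss per step by `2 √(ℓ |X|) √(ℓ' |Y|)`. So `|R| / 3 ≤ 2 T √(ℓ ℓ' |X| |Y|)`,
and `h |X| ≤ |R|`, `h' |Y| ≤ |R|` turn this into `T ≥ √(h h' / (ℓ ℓ')) / 6`.
-/

/-- Basis index for the algorithm's Hilbert space: `p` query registers over `Fin N`,
`p` result bits, and a workspace register `Fin d`. -/
abbrev QIdx (N p d : ℕ) := (Fin p → Fin N) × (Fin p → Bool) × Fin d

/-- The `p`-parallel oracle unitary for the oracle string `x : Fin N → Bool`, as a matrix: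
`|i₁,…,i_p; b₁,…,b_p; w⟩ ↦ |i₁,…,i_p; b₁ ⊕ x_{i₁}, …, b_p ⊕ x_{i_p}; w⟩`. -/
def oracleMatrix {N p d : ℕ} (x : Fin N → Bool) : Matrix (QIdx N p d) (QIdx N p d) ℂ :=
  Matrix.of fun k k' =>
    if k.1 = k'.1 ∧ k.2.2 = k'.2.2 ∧ (∀ j, k.2.1 j = xor (k'.2.1 j) (x (k'.1 j)))
    then 1 else 0

/-- The state of the algorithm after `t` rounds of parallel queries (interleaved with the
unitaries `U 0, …, U t`), starting from the basis state `e₀`: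
`U t · O_x^{⊗p} · U (t-1) ⋯ U 1 · O_x^{⊗p} · U 0 |e₀⟩`. -/
noncomputable def algState {N p d : ℕ} (U : ℕ → Matrix (QIdx N p d) (QIdx N p d) ℂ)
    (x : Fin N → Bool) (e₀ : QIdx N p d) : ℕ → EuclideanSpace ℂ (QIdx N p d)
  | 0 => WithLp.toLp 2 ((U 0).mulVec fun k => if k = e₀ then 1 else 0)
  | (t + 1) => WithLp.toLp 2 ((U (t + 1)).mulVec ((oracleMatrix x).mulVec (algState U x e₀ t)))

open Finset Matrix ComplexConjugate
open scoped InnerProductSpace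

section FiniteSums

variable {ι κ : Type*}

lemma norm_sum_conj_mul_le (s : Finset ι) (u v : ι → ℂ) :
    ‖∑ k ∈ s, conj (u k) * v k‖ ≤ √(∑ k ∈ s, ‖u k‖ ^ 2) * √(∑ k ∈ s, ‖v k‖ ^ 2) :=
  (norm_sum_le _ _).trans <| by simpa using Real.sum_mul_le_sqrt_mul_sqrt s (‖u ·‖) (‖v ·‖)

lemma sum_sum_sqrt_mul_sqrt_le (R : Finset κ) (D : κ → Finset ι) {f g : κ → ι → ℝ}
    (hf : ∀ r i, 0 ≤ f r i) (hg : ∀ r i, 0 ≤ g r i) :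
    ∑ r ∈ R, ∑ i ∈ D r, √(f r i) * √(g r i) ≤
      √(∑ r ∈ R, ∑ i ∈ D r, f r i) * √(∑ r ∈ R, ∑ i ∈ D r, g r i) := by
  simp only [sum_sigma']
  exact Real.sum_sqrt_mul_sqrt_le _ (fun x => hf x.1 x.2) (fun x => hg x.1 x.2)

lemma sum_sum_le_mul_sum_of_card_filter_le [Fintype ι] [DecidableEq ι] (S : Finset κ)
    (D : κ → Finset ι) {g : ι → ℝ} (hg : ∀ i, 0 ≤ g i) {L : ℕ}
    (hL : ∀ i, #{b ∈ S | i ∈ D b} ≤ L) :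
    ∑ b ∈ S, ∑ i ∈ D b, g i ≤ L * ∑ i, g i := by
  rw [sum_comm' (t' := univ) (s' := fun i => {b ∈ S | i ∈ D b}) (by simp), mul_sum]
  refine sum_le_sum fun i _ => ?_
  rw [sum_const, nsmul_eq_mul]
  exact mul_le_mul_of_nonneg_right (by exact_mod_cast hL i) (hg i)

end FiniteSums

section Relation

variable {α β : Type*} [DecidableEq α] [DecidableEq β] {X : Finset α} {Y : Finset β}
  {R : Finset (α × β)}

lemma sum_rel_eq_sum_fst {M : Type*} [AddCommMonoid M] (hR : ∀ r ∈ R, r.1 ∈ X ∧ r.2 ∈ Y)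
    (f : α × β → M) : ∑ r ∈ R, f r = ∑ a ∈ X, ∑ b ∈ Y with (a, b) ∈ R, f (a, b) :=
  sum_finset_product _ _ _ fun r => by have := hR r; simp only [mem_filter, Prod.mk.eta]; tauto

lemma sum_rel_eq_sum_snd {M : Type*} [AddCommMonoid M] (hR : ∀ r ∈ R, r.1 ∈ X ∧ r.2 ∈ Y)
    (f : α × β → M) : ∑ r ∈ R, f r = ∑ b ∈ Y, ∑ a ∈ X with (a, b) ∈ R, f (a, b) :=
  sum_finset_product_right _ _ _ fun r => by have := hR r; simp only [mem_filter, Prod.mk.eta]; tauto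

lemma mul_card_le_card_rel_fst (hR : ∀ r ∈ R, r.1 ∈ X ∧ r.2 ∈ Y) {h : ℕ}
    (hrow : ∀ a ∈ X, h ≤ #{b ∈ Y | (a, b) ∈ R}) : h * #X ≤ #R := by
  rw [card_eq_sum_ones R, sum_rel_eq_sum_fst hR, mul_comm, ← smul_eq_mul]
  exact card_nsmul_le_sum _ _ _ fun a ha => by simpa using hrow a ha

lemma mul_card_le_card_rel_snd (hR : ∀ r ∈ R, r.1 ∈ X ∧ r.2 ∈ Y) {h : ℕ}
    (hcol : ∀ b ∈ Y, h ≤ #{a ∈ X | (a, b) ∈ R}) : h * #Y ≤ #R := by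
  rw [card_eq_sum_ones R, sum_rel_eq_sum_snd hR, mul_comm, ← smul_eq_mul]
  exact card_nsmul_le_sum _ _ _ fun b hb => by simpa using hcol b hb

variable {ι : Type*} [Fintype ι] [DecidableEq ι]

theorem sum_rel_sum_le_mul_sum_fst (hR : ∀ r ∈ R, r.1 ∈ X ∧ r.2 ∈ Y) (D : α → β → Finset ι)
    {g : α → ι → ℝ} (hg : ∀ a i, 0 ≤ g a i) {L : ℕ}
    (hL : ∀ i, ∀ a ∈ X, #{b ∈ Y | (a, b) ∈ R ∧ i ∈ D a b} ≤ L) :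
    ∑ r ∈ R, ∑ i ∈ D r.1 r.2, g r.1 i ≤ L * ∑ a ∈ X, ∑ i, g a i := by
  rw [sum_rel_eq_sum_fst hR, mul_sum]
  exact sum_le_sum fun a ha => sum_sum_le_mul_sum_of_card_filter_le _ _ (hg a) fun i => by
    rw [filter_filter]; exact hL i a ha

theorem sum_rel_sum_le_mul_sum_snd (hR : ∀ r ∈ R, r.1 ∈ X ∧ r.2 ∈ Y) (D : α → β → Finset ι)
    {g : β → ι → ℝ} (hg : ∀ b i, 0 ≤ g b i) {L : ℕ}
    (hL : ∀ i, ∀ b ∈ Y, #{a ∈ X | (a, b) ∈ R ∧ i ∈ D a b} ≤ L) :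
    ∑ r ∈ R, ∑ i ∈ D r.1 r.2, g r.2 i ≤ L * ∑ b ∈ Y, ∑ i, g b i := by
  rw [sum_rel_eq_sum_snd hR, mul_sum]
  exact sum_le_sum fun b hb => sum_sum_le_mul_sum_of_card_filter_le _ _ (hg b) fun i => by
    rw [filter_filter]; exact hL i b hb

end Relation

section EuclideanSpace

variable {ι : Type*} [Fintype ι]

lemma inner_eq_sum_conj_mul (u v : EuclideanSpace ℂ ι) :
    ⟪u, v⟫_ℂ = ∑ k, conj (u k) * v k := by
  simp [PiLp.inner_apply, mul_comm]

lemma sum_norm_sq_le_one {u : EuclideanSpace ℂ ι} (hu : ‖u‖ = 1) (s : Finset ι) :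
    ∑ k ∈ s, ‖u k‖ ^ 2 ≤ 1 :=
  calc ∑ k ∈ s, ‖u k‖ ^ 2 ≤ ∑ k, ‖u k‖ ^ 2 :=
        sum_le_sum_of_subset_of_nonneg (subset_univ s) fun _ _ _ => sq_nonneg _
    _ = 1 := by rw [← EuclideanSpace.norm_sq_eq, hu, one_pow]

theorem norm_inner_le_of_disjoint [DecidableEq ι] {u v : EuclideanSpace ℂ ι} (hu : ‖u‖ = 1)
    (hv : ‖v‖ = 1) {A B : Finset ι} (hAB : Disjoint A B) {ε : ℝ}
    (huA : 1 - ε ≤ ∑ k ∈ A, ‖u k‖ ^ 2) (hvB : 1 - ε ≤ ∑ k ∈ B, ‖v k‖ ^ 2) :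
    ‖⟪u, v⟫_ℂ‖ ≤ 2 * √ε := by
  have huAc : ∑ k ∈ Aᶜ, ‖u k‖ ^ 2 ≤ ε := by
    have := sum_add_sum_compl A fun k => ‖u k‖ ^ 2
    rw [← EuclideanSpace.norm_sq_eq, hu] at this
    linarith
  have hvA : ∑ k ∈ A, ‖v k‖ ^ 2 ≤ ε := by
    have := sum_add_sum_compl B fun k => ‖v k‖ ^ 2
    rw [← EuclideanSpace.norm_sq_eq, hv] at this
    have := sum_le_sum_of_subset_of_nonneg (fun k hk => mem_compl.mpr (disjoint_left.mp hAB hk))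
      fun k _ _ => sq_nonneg ‖v k‖
    linarith
  have hA : ‖∑ k ∈ A, conj (u k) * v k‖ ≤ √1 * √ε :=
    (norm_sum_conj_mul_le _ _ _).trans (by gcongr; exact sum_norm_sq_le_one hu A)
  have hAc : ‖∑ k ∈ Aᶜ, conj (u k) * v k‖ ≤ √ε * √1 :=
    (norm_sum_conj_mul_le _ _ _).trans (by gcongr; exact sum_norm_sq_le_one hv Aᶜ)
  calc ‖⟪u, v⟫_ℂ‖
      ≤ ‖∑ k ∈ A, conj (u k) * v k‖ + ‖∑ k ∈ Aᶜ, conj (u k) * v k‖ := by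
        rw [inner_eq_sum_conj_mul, ← sum_add_sum_compl A]
        exact norm_add_le _ _
    _ ≤ √1 * √ε + √ε * √1 := add_le_add hA hAc
    _ = 2 * √ε := by rw [Real.sqrt_one]; ring

variable {𝕜 : Type*} [RCLike 𝕜]

lemma norm_toLp_comp_perm (σ : Equiv.Perm ι) (u : ι → 𝕜) :
    ‖WithLp.toLp 2 (u ∘ σ)‖ = ‖WithLp.toLp 2 u‖ := by
  simp only [EuclideanSpace.norm_eq, Function.comp_apply]
  rw [Equiv.sum_comp σ fun k => ‖u k‖ ^ 2]

variable [DecidableEq ι]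

lemma inner_toLp_mulVec_of_mem_unitaryGroup {M : Matrix ι ι 𝕜}
    (hM : M ∈ Matrix.unitaryGroup ι 𝕜) (u v : ι → 𝕜) :
    ⟪WithLp.toLp 2 (M *ᵥ u), WithLp.toLp 2 (M *ᵥ v)⟫_𝕜 = ⟪WithLp.toLp 2 u, WithLp.toLp 2 v⟫_𝕜 := by
  simp only [EuclideanSpace.inner_toLp_toLp]
  rw [star_mulVec, dotProduct_comm, ← dotProduct_mulVec, mulVec_mulVec,
    ← star_eq_conjTranspose, mem_unitaryGroup_iff'.mp hM, one_mulVec, dotProduct_comm]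

lemma norm_toLp_mulVec_of_mem_unitaryGroup {M : Matrix ι ι 𝕜}
    (hM : M ∈ Matrix.unitaryGroup ι 𝕜) (u : ι → 𝕜) :
    ‖WithLp.toLp 2 (M *ᵥ u)‖ = ‖WithLp.toLp 2 u‖ := by
  rw [norm_eq_sqrt_re_inner (𝕜 := 𝕜), inner_toLp_mulVec_of_mem_unitaryGroup hM,
    ← norm_eq_sqrt_re_inner]

end EuclideanSpace

section Oracle

variable {N p d : ℕ}

def oracleFlip (x : Fin N → Bool) : Equiv.Perm (QIdx N p d) :=
  Function.Involutive.toPerm (fun k => (k.1, fun j => xor (k.2.1 j) (x (k.1 j)), k.2.2))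
    fun k => by simp

lemma oracleFlip_apply (x : Fin N → Bool) (k : QIdx N p d) :
    oracleFlip x k = (k.1, fun j => xor (k.2.1 j) (x (k.1 j)), k.2.2) :=
  rfl

@[simp] lemma oracleFlip_fst (x : Fin N → Bool) (k : QIdx N p d) : (oracleFlip x k).1 = k.1 :=
  rfl

lemma oracleFlip_eq_of_forall_eq {x y : Fin N → Bool} {k : QIdx N p d}
    (h : ∀ j, x (k.1 j) = y (k.1 j)) : oracleFlip x k = oracleFlip y k := by
  simp [oracleFlip_apply, h]

lemma oracleMatrix_apply (x : Fin N → Bool) (k k' : QIdx N p d) :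
    oracleMatrix x k k' = if k' = oracleFlip x k then 1 else 0 := by
  obtain ⟨i, b, w⟩ := k
  obtain ⟨i', b', w'⟩ := k'
  simp only [oracleMatrix, oracleFlip_apply, Matrix.of_apply, Prod.mk.injEq]
  congr 1
  apply propext
  constructor
  · rintro ⟨rfl, rfl, h⟩
    exact ⟨rfl, funext fun j => by simp [h], rfl⟩
  · rintro ⟨rfl, rfl, rfl⟩
    exact ⟨rfl, rfl, fun j => by simp⟩

lemma oracleMatrix_mulVec (x : Fin N → Bool) (v : QIdx N p d → ℂ) :
    oracleMatrix x *ᵥ v = v ∘ oracleFlip x := by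
  ext k
  simp [Matrix.mulVec, dotProduct, oracleMatrix_apply]

lemma sum_fiber_comp_oracleFlip {M : Type*} [AddCommMonoid M] (x : Fin N → Bool)
    (i : Fin p → Fin N) (f : QIdx N p d → M) :
    ∑ k with k.1 = i, f (oracleFlip x k) = ∑ k with k.1 = i, f k :=
  sum_equiv (oracleFlip x) (by simp) fun _ _ => rfl

end Oracle

section State

variable {N p d : ℕ} {U : ℕ → Matrix (QIdx N p d) (QIdx N p d) ℂ} {e₀ : QIdx N p d}

lemma algState_succ (x : Fin N → Bool) (t : ℕ) :
    algState U x e₀ (t + 1) = WithLp.toLp 2 (U (t + 1) *ᵥ (algState U x e₀ t ∘ oracleFlip x)) := by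
  rw [algState, oracleMatrix_mulVec]

lemma norm_algState (hU : ∀ t, U t ∈ Matrix.unitaryGroup (QIdx N p d) ℂ) (x : Fin N → Bool) :
    ∀ t, ‖algState U x e₀ t‖ = 1
  | 0 => by
    rw [algState, norm_toLp_mulVec_of_mem_unitaryGroup (hU 0)]
    simp [EuclideanSpace.norm_eq, apply_ite (‖·‖ ^ 2)]
  | t + 1 => by
    rw [algState_succ, norm_toLp_mulVec_of_mem_unitaryGroup (hU _), norm_toLp_comp_perm]
    exact norm_algState hU x t

lemma inner_algState_succ (hU : ∀ t, U t ∈ Matrix.unitaryGroup (QIdx N p d) ℂ)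
    (x y : Fin N → Bool) (t : ℕ) :
    ⟪algState U x e₀ (t + 1), algState U y e₀ (t + 1)⟫_ℂ =
      ∑ k, conj (algState U x e₀ t (oracleFlip x k)) * algState U y e₀ t (oracleFlip y k) := by
  rw [algState_succ, algState_succ, inner_toLp_mulVec_of_mem_unitaryGroup (hU _),
    EuclideanSpace.inner_toLp_toLp]
  simp [dotProduct, mul_comm]

end State

section Query

variable {N p d : ℕ}

def distinguishingQueries (x y : Fin N → Bool) : Finset (Fin p → Fin N) :=
  {i | ∃ j, x (i j) ≠ y (i j)}

@[simp] lemma mem_distinguishingQueries {x y : Fin N → Bool} {i : Fin p → Fin N} :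
    i ∈ distinguishingQueries x y ↔ ∃ j, x (i j) ≠ y (i j) := by
  simp [distinguishingQueries]

noncomputable def queryMass (u : EuclideanSpace ℂ (QIdx N p d)) (i : Fin p → Fin N) : ℝ :=
  ∑ k with k.1 = i, ‖u k‖ ^ 2

lemma queryMass_nonneg (u : EuclideanSpace ℂ (QIdx N p d)) (i : Fin p → Fin N) :
    0 ≤ queryMass u i :=
  sum_nonneg fun _ _ => sq_nonneg _

lemma sum_queryMass (u : EuclideanSpace ℂ (QIdx N p d)) : ∑ i, queryMass u i = ‖u‖ ^ 2 := by
  rw [EuclideanSpace.norm_sq_eq]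
  exact sum_fiberwise _ _ _

theorem norm_sum_oracleFlip_sub_inner_le (x y : Fin N → Bool)
    (u v : EuclideanSpace ℂ (QIdx N p d)) :
    ‖∑ k, conj (u (oracleFlip x k)) * v (oracleFlip y k) - ⟪u, v⟫_ℂ‖ ≤
      2 * ∑ i ∈ distinguishingQueries x y, √(queryMass u i) * √(queryMass v i) := by
  set A : (Fin p → Fin N) → ℂ := fun i =>
    ∑ k with k.1 = i, conj (u (oracleFlip x k)) * v (oracleFlip y k)
  set B : (Fin p → Fin N) → ℂ := fun i => ∑ k with k.1 = i, conj (u k) * v k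
  have hA : ∀ i, ‖A i‖ ≤ √(queryMass u i) * √(queryMass v i) := fun i =>
    (norm_sum_conj_mul_le _ _ _).trans_eq <| by
      rw [sum_fiber_comp_oracleFlip x i (‖u ·‖ ^ 2), sum_fiber_comp_oracleFlip y i (‖v ·‖ ^ 2)]
      rfl
  have hB : ∀ i, ‖B i‖ ≤ √(queryMass u i) * √(queryMass v i) := fun i =>
    norm_sum_conj_mul_le _ _ _
  have hAB : ∀ i ∉ distinguishingQueries x y, A i = B i := by
    intro i hi
    simp only [mem_distinguishingQueries, not_exists, not_not] at hi
    calc A i = ∑ k with k.1 = i, conj (u (oracleFlip x k)) * v (oracleFlip x k) :=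
          sum_congr rfl fun k hk => by
            rw [oracleFlip_eq_of_forall_eq (x := x) (y := y) ((mem_filter.mp hk).2 ▸ hi)]
      _ = B i := sum_fiber_comp_oracleFlip x i fun k => conj (u k) * v k
  calc ‖∑ k, conj (u (oracleFlip x k)) * v (oracleFlip y k) - ⟪u, v⟫_ℂ‖
      = ‖∑ i ∈ distinguishingQueries x y, (A i - B i)‖ := by
        rw [inner_eq_sum_conj_mul, ← sum_fiberwise univ Prod.fst, ← sum_fiberwise univ Prod.fst,
          ← sum_sub_distrib, ← sum_subset (subset_univ _) fun i _ hi => sub_eq_zero.mpr (hAB i hi)]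
    _ ≤ ∑ i ∈ distinguishingQueries x y, (‖A i‖ + ‖B i‖) :=
        (norm_sum_le _ _).trans (sum_le_sum fun i _ => norm_sub_le _ _)
    _ ≤ 2 * ∑ i ∈ distinguishingQueries x y, √(queryMass u i) * √(queryMass v i) := by
        rw [mul_sum]
        exact sum_le_sum fun i _ => by linarith [hA i, hB i]

end Query

section Progress

variable {N p d : ℕ} {U : ℕ → Matrix (QIdx N p d) (QIdx N p d) ℂ} {e₀ : QIdx N p d}

noncomputable def adversaryProgress (U : ℕ → Matrix (QIdx N p d) (QIdx N p d) ℂ)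
    (e₀ : QIdx N p d) (R : Finset ((Fin N → Bool) × (Fin N → Bool))) (t : ℕ) : ℝ :=
  ∑ r ∈ R, (⟪algState U r.1 e₀ t, algState U r.2 e₀ t⟫_ℂ).re

lemma adversaryProgress_zero (hU : ∀ t, U t ∈ Matrix.unitaryGroup (QIdx N p d) ℂ)
    (R : Finset ((Fin N → Bool) × (Fin N → Bool))) : adversaryProgress U e₀ R 0 = #R := by
  have hone : ∀ r ∈ R, (⟪algState U r.1 e₀ 0, algState U r.2 e₀ 0⟫_ℂ).re = 1 := fun r _ => by
    rw [show algState U r.2 e₀ 0 = algState U r.1 e₀ 0 from rfl, inner_self_eq_norm_sq_to_K,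
      norm_algState hU]
    simp
  simp [adversaryProgress, sum_congr rfl hone]

lemma re_inner_algState_sub_succ_le (hU : ∀ t, U t ∈ Matrix.unitaryGroup (QIdx N p d) ℂ)
    (x y : Fin N → Bool) (t : ℕ) :
    (⟪algState U x e₀ t, algState U y e₀ t⟫_ℂ).re -
        (⟪algState U x e₀ (t + 1), algState U y e₀ (t + 1)⟫_ℂ).re ≤
      2 * ∑ i ∈ distinguishingQueries x y,
        √(queryMass (algState U x e₀ t) i) * √(queryMass (algState U y e₀ t) i) := by
  rw [← Complex.sub_re]
  refine (Complex.re_le_norm _).trans ?_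
  rw [norm_sub_rev, inner_algState_succ hU]
  exact norm_sum_oracleFlip_sub_inner_le _ _ _ _

theorem adversaryProgress_sub_succ_le (hU : ∀ t, U t ∈ Matrix.unitaryGroup (QIdx N p d) ℂ)
    {X Y : Finset (Fin N → Bool)} {R : Finset ((Fin N → Bool) × (Fin N → Bool))}
    (hR : ∀ r ∈ R, r.1 ∈ X ∧ r.2 ∈ Y) {ℓ ℓ' : ℕ}
    (hrow' : ∀ i : Fin p → Fin N, ∀ a ∈ X,
      (Y.filter fun b => (a, b) ∈ R ∧ ∃ j, a (i j) ≠ b (i j)).card ≤ ℓ)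
    (hcol' : ∀ i : Fin p → Fin N, ∀ b ∈ Y,
      (X.filter fun a => (a, b) ∈ R ∧ ∃ j, a (i j) ≠ b (i j)).card ≤ ℓ') (t : ℕ) :
    adversaryProgress U e₀ R t - adversaryProgress U e₀ R (t + 1) ≤
      2 * √(ℓ * #X) * √(ℓ' * #Y) := by
  set q : (Fin N → Bool) → (Fin p → Fin N) → ℝ := fun z => queryMass (algState U z e₀ t)
  have hq : ∀ z i, 0 ≤ q z i := fun z => queryMass_nonneg _
  have hq1 : ∀ z, ∑ i, q z i = 1 := by simp [q, sum_queryMass, norm_algState hU]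
  have hmassX : ∑ r ∈ R, ∑ i ∈ distinguishingQueries r.1 r.2, q r.1 i ≤ ℓ * #X := by
    simpa [hq1] using sum_rel_sum_le_mul_sum_fst hR distinguishingQueries hq
      fun i a ha => by simpa using hrow' i a ha
  have hmassY : ∑ r ∈ R, ∑ i ∈ distinguishingQueries r.1 r.2, q r.2 i ≤ ℓ' * #Y := by
    simpa [hq1] using sum_rel_sum_le_mul_sum_snd hR distinguishingQueries hq
      fun i b hb => by simpa using hcol' i b hb
  calc adversaryProgress U e₀ R t - adversaryProgress U e₀ R (t + 1)
      ≤ ∑ r ∈ R, 2 * ∑ i ∈ distinguishingQueries r.1 r.2, √(q r.1 i) * √(q r.2 i) := by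
        rw [adversaryProgress, adversaryProgress, ← sum_sub_distrib]
        exact sum_le_sum fun r _ => re_inner_algState_sub_succ_le hU r.1 r.2 t
    _ ≤ 2 * (√(∑ r ∈ R, ∑ i ∈ distinguishingQueries r.1 r.2, q r.1 i) *
          √(∑ r ∈ R, ∑ i ∈ distinguishingQueries r.1 r.2, q r.2 i)) := by
        rw [← mul_sum]
        gcongr
        exact sum_sum_sqrt_mul_sqrt_le R _ (fun r => hq r.1) (fun r => hq r.2)
    _ ≤ 2 * √(ℓ * #X) * √(ℓ' * #Y) := by
        rw [mul_assoc]
        gcongr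

theorem adversaryProgress_le (hU : ∀ t, U t ∈ Matrix.unitaryGroup (QIdx N p d) ℂ)
    {X Y : Finset (Fin N → Bool)} {R : Finset ((Fin N → Bool) × (Fin N → Bool))}
    (hR : ∀ r ∈ R, r.1 ∈ X ∧ r.2 ∈ Y) {V : Type*}
    (F : (Fin N → Bool) → Set V) [∀ z, DecidablePred (· ∈ F z)]
    (hF : ∀ a ∈ X, ∀ b ∈ Y, F a ∩ F b = ∅) (out : QIdx N p d → V) {T : ℕ}
    (hsucc : ∀ z ∈ X ∪ Y,
      (9 : ℝ) / 10 ≤ ∑ k ∈ univ.filter (fun k => out k ∈ F z), ‖algState U z e₀ T k‖ ^ 2) :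
    adversaryProgress U e₀ R T ≤ 2 / 3 * #R := by
  have hpair : ∀ r ∈ R, (⟪algState U r.1 e₀ T, algState U r.2 e₀ T⟫_ℂ).re ≤ 2 / 3 := by
    rintro ⟨a, b⟩ hr
    obtain ⟨ha, hb⟩ := hR _ hr
    have hdisj : Disjoint (univ.filter fun k => out k ∈ F a) (univ.filter fun k => out k ∈ F b) :=
      disjoint_filter.mpr fun k _ hka hkb =>
        Set.eq_empty_iff_forall_notMem.mp (hF a ha b hb) _ ⟨hka, hkb⟩
    have hsqrt : √(1 / 10 : ℝ) ≤ 1 / 3 := by rw [Real.sqrt_le_left] <;> norm_num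
    calc (⟪algState U a e₀ T, algState U b e₀ T⟫_ℂ).re
        ≤ ‖⟪algState U a e₀ T, algState U b e₀ T⟫_ℂ‖ := Complex.re_le_norm _
      _ ≤ 2 * √(1 / 10) := norm_inner_le_of_disjoint (norm_algState hU a T) (norm_algState hU b T)
          hdisj (by linarith [hsucc a (mem_union_left Y ha)])
          (by linarith [hsucc b (mem_union_right X hb)])
      _ ≤ 2 / 3 := by linarith
  calc adversaryProgress U e₀ R T ≤ ∑ _r ∈ R, (2 / 3 : ℝ) := sum_le_sum hpair
    _ = 2 / 3 * #R := by rw [sum_const, nsmul_eq_mul, mul_comm]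

end Progress

lemma sqrt_div_le_of_le_mul_sqrt {h h' ℓ ℓ' x y r c : ℝ} (hh : 0 ≤ h) (hh' : 0 ≤ h')
    (hℓ : 0 ≤ ℓ) (hℓ' : 0 ≤ ℓ') (hx : 0 < x) (hy : 0 < y) (hc : 0 ≤ c) (hrx : h * x ≤ r)
    (hry : h' * y ≤ r) (hr : r ≤ c * √(ℓ * ℓ' * (x * y))) : √(h * h' / (ℓ * ℓ')) ≤ c := by
  have hsq : h * h' * (x * y) ≤ c ^ 2 * (ℓ * ℓ') * (x * y) :=
    calc h * h' * (x * y) = (h * x) * (h' * y) := by ring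
      _ ≤ r ^ 2 := by rw [sq]; gcongr; exact le_trans (by positivity) hrx
      _ ≤ (c * √(ℓ * ℓ' * (x * y))) ^ 2 := by gcongr; exact le_trans (by positivity) hrx
      _ = c ^ 2 * (ℓ * ℓ') * (x * y) := by rw [mul_pow, Real.sq_sqrt (by positivity)]; ring
  exact (Real.sqrt_le_left hc).mpr <| div_le_of_le_mul₀ (by positivity) (by positivity)
    (le_of_mul_le_mul_right hsq (by positivity))

theorem combinatorial_parallel_adversary_bound_general
    {N p d T : ℕ} {V : Type*}
    (X Y : Finset (Fin N → Bool))
    (hX : X.Nonempty) (hY : Y.Nonempty)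
    (F : (Fin N → Bool) → Set V) [∀ z, DecidablePred (· ∈ F z)]
    (hF : ∀ a ∈ X, ∀ b ∈ Y, F a ∩ F b = ∅)
    (R : Finset ((Fin N → Bool) × (Fin N → Bool)))
    (hR : ∀ r ∈ R, r.1 ∈ X ∧ r.2 ∈ Y)
    (h h' ℓ ℓ' : ℕ)
    (hrow : ∀ a ∈ X, h ≤ (Y.filter fun b => (a, b) ∈ R).card)
    (hcol : ∀ b ∈ Y, h' ≤ (X.filter fun a => (a, b) ∈ R).card)
    (hrow' : ∀ i : Fin p → Fin N, ∀ a ∈ X,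
      (Y.filter fun b => (a, b) ∈ R ∧ ∃ j, a (i j) ≠ b (i j)).card ≤ ℓ)
    (hcol' : ∀ i : Fin p → Fin N, ∀ b ∈ Y,
      (X.filter fun a => (a, b) ∈ R ∧ ∃ j, a (i j) ≠ b (i j)).card ≤ ℓ')
    (out : QIdx N p d → V)
    (U : ℕ → Matrix (QIdx N p d) (QIdx N p d) ℂ)
    (hU : ∀ t, U t ∈ Matrix.unitaryGroup (QIdx N p d) ℂ)
    (e₀ : QIdx N p d)
    (hsucc : ∀ z ∈ X ∪ Y,
      (9 : ℝ) / 10 ≤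
        ∑ k ∈ Finset.univ.filter (fun k => out k ∈ F z), ‖algState U z e₀ T k‖ ^ 2) :
    (1 / 6 : ℝ) * Real.sqrt ((h * h' : ℝ) / (ℓ * ℓ')) ≤ T := by
  set W := adversaryProgress U e₀ R
  have hW0 : W 0 = #R := adversaryProgress_zero hU R
  have hWT : W T ≤ 2 / 3 * #R := adversaryProgress_le hU hR F hF out hsucc
  have hstep : ∀ t, W t - W (t + 1) ≤ 2 * √(ℓ * #X) * √(ℓ' * #Y) :=
    adversaryProgress_sub_succ_le hU hR hrow' hcol'
  have hdrop : (#R : ℝ) ≤ 6 * T * √(ℓ * ℓ' * (#X * #Y)) :=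
    calc (#R : ℝ) ≤ 3 * (W 0 - W T) := by linarith
      _ = 3 * ∑ t ∈ range T, (W t - W (t + 1)) := by rw [sum_range_sub']
      _ ≤ 3 * ∑ t ∈ range T, 2 * √(ℓ * #X) * √(ℓ' * #Y) := by gcongr with t; exact hstep t
      _ = 6 * T * √(ℓ * ℓ' * (#X * #Y)) := by
          rw [sum_const, card_range, nsmul_eq_mul, mul_assoc, ← Real.sqrt_mul (by positivity)]
          ring_nf
  have hsqrt : √((h * h' : ℝ) / (ℓ * ℓ')) ≤ 6 * T :=
    sqrt_div_le_of_le_mul_sqrt (by positivity) (by positivity) (by positivity) (by positivity)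
      (by exact_mod_cast hX.card_pos) (by exact_mod_cast hY.card_pos) (by positivity)
      (by exact_mod_cast mul_card_le_card_rel_fst hR hrow)
      (by exact_mod_cast mul_card_le_card_rel_snd hR hcol) hdrop
  linarith

/-- **Combinatorial parallel adversary bound (Theorem 2).**
If `R ⊆ X × Y` has minimum degrees `h, h'` and the zeroed-out relations `R^{i₁⋯i_p}` have
maximum degrees `ℓ, ℓ'`, and a `T`-step `p`-parallel algorithm computes a value in `F z`
with probability at least `9/10` for every oracle `z ∈ X ∪ Y`, where `F` has disjoint
value sets across `X` and `Y`, then `T ≥ (1/6)·√(h·h'/(ℓ·ℓ'))`. -/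
theorem combinatorial_parallel_adversary_bound
    {N p d T : ℕ} (hp : 1 ≤ p) {V : Type*}
    (X Y : Finset (Fin N → Bool)) (hXY : Disjoint X Y)
    (hX : X.Nonempty) (hY : Y.Nonempty)
    (F : (Fin N → Bool) → Set V) [∀ z, DecidablePred (· ∈ F z)]
    (hF : ∀ a ∈ X, ∀ b ∈ Y, F a ∩ F b = ∅)
    (R : Finset ((Fin N → Bool) × (Fin N → Bool)))
    (hR : ∀ r ∈ R, r.1 ∈ X ∧ r.2 ∈ Y)
    (h h' ℓ ℓ' : ℕ) (hh : 1 ≤ h) (hh' : 1 ≤ h') (hℓ : 1 ≤ ℓ) (hℓ' : 1 ≤ ℓ')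
    (hrow : ∀ a ∈ X, h ≤ (Y.filter fun b => (a, b) ∈ R).card)
    (hcol : ∀ b ∈ Y, h' ≤ (X.filter fun a => (a, b) ∈ R).card)
    (hrow' : ∀ i : Fin p → Fin N, ∀ a ∈ X,
      (Y.filter fun b => (a, b) ∈ R ∧ ∃ j, a (i j) ≠ b (i j)).card ≤ ℓ)
    (hcol' : ∀ i : Fin p → Fin N, ∀ b ∈ Y,
      (X.filter fun a => (a, b) ∈ R ∧ ∃ j, a (i j) ≠ b (i j)).card ≤ ℓ')
    (out : QIdx N p d → V)
    (U : ℕ → Matrix (QIdx N p d) (QIdx N p d) ℂ)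
    (hU : ∀ t, U t ∈ Matrix.unitaryGroup (QIdx N p d) ℂ)
    (e₀ : QIdx N p d)
    (hsucc : ∀ z ∈ X ∪ Y,
      (9 : ℝ) / 10 ≤
        ∑ k ∈ Finset.univ.filter (fun k => out k ∈ F z), ‖algState U z e₀ T k‖ ^ 2) :
    (1 / 6 : ℝ) * Real.sqrt ((h * h' : ℝ) / (ℓ * ℓ')) ≤ T :=
  combinatorial_parallel_adversary_bound_general X Y hX hY F hF R hR h h' ℓ ℓ' hrow hcol hrow' hcol'
    out U hU e₀ hsucc
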